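/- arXiv:2404.02086 — 4 statements merged into one kernel-verified Lean document; each statement's English description precedes it below -/
import Mathlib

section
/- Let n ≥ 1, 0 < λ ≤ Λ, μ ∈ (0,1] and M ≥ 0. Let A : ℝⁿ → ℝ^{n×n} be a uniformly elliptic matrix field with constants λ, Λ satisfying ‖A(x) − A(y)‖ ≤ M|x − y|^μ for all x, y ∈ ℝⁿ. Fix x₀ ∈ ℝⁿ and r, ρ > 0, and define B(y) := A(x₀)^{−1/2} · A(x₀ + r·A(x₀)^{1/2} y) · A(x₀)^{−1/2}. Then for every x ∈ ℝⁿ with |x| < ρ and every ν ∈ ℝⁿ with |ν| = 1, one has |⟨B(x)ν, ν⟩^{1/2} − 1| ≤ (Λ^{(μ+1)/2}/(2λ^{3/2}))·M·(rρ)^μ. -/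
open scoped RealInnerProductSpace Matrix.Norms.L2Operator

/-- The square root of a positive semidefinite matrix (junk value `0` if the matrix is
not positive semidefinite). -/
noncomputable def matrixSqrt {n : ℕ} (A : Matrix (Fin n) (Fin n) ℝ) :
    Matrix (Fin n) (Fin n) ℝ :=
  @dite _ A.PosSemidef (Classical.dec _) (fun h => (h.1.eigenvectorUnitary : Matrix (Fin n) (Fin n) ℝ) *
    Matrix.diagonal ((RCLike.ofReal : ℝ → ℝ) ∘ Real.sqrt ∘ h.1.eigenvalues) *
    (star h.1.eigenvectorUnitary : Matrix (Fin n) (Fin n) ℝ)) (fun _ => 0)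

/-!
Write `P = A(x₀)^{1/2}`, `z = x₀ + r P x` and `w = P⁻¹ ν`. Then `⟨B(x)ν, ν⟩ = ⟨A(z)w, w⟩` while
`⟨A(x₀)w, w⟩ = |P w|² = 1`, so ellipticity at `x₀` gives `1/Λ ≤ |w|² ≤ 1/λ`. Hence
`t := ⟨B(x)ν, ν⟩ ≥ λ/Λ` and `|t - 1| ≤ ‖A(z) - A(x₀)‖ |w|² ≤ M |z - x₀|^μ / λ`, where
`|z - x₀| = r |P x| ≤ r √Λ ρ`. Finally `|√t - 1| = |t - 1| / (√t + 1) ≤ |t - 1| / (2 √(λ/Λ))`.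
-/

section MatrixOrder

open scoped MatrixOrder

lemma matrixSqrt_eq_sqrt {n : ℕ} {A : Matrix (Fin n) (Fin n) ℝ} (hA : A.PosSemidef) :
    matrixSqrt A = CFC.sqrt A := by
  rw [CFC.sqrt_eq_real_sqrt A hA.nonneg, cfcₙ_eq_cfc, hA.1.cfc_eq, matrixSqrt, dif_pos hA,
    Matrix.IsHermitian.cfc, Unitary.conjStarAlgAut_apply]

lemma matrixSqrt_mul_self {n : ℕ} {A : Matrix (Fin n) (Fin n) ℝ} (hA : A.PosSemidef) :
    matrixSqrt A * matrixSqrt A = A := by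
  rw [matrixSqrt_eq_sqrt hA, CFC.sqrt_mul_sqrt_self A hA.nonneg]

lemma posSemidef_matrixSqrt {n : ℕ} {A : Matrix (Fin n) (Fin n) ℝ} (hA : A.PosSemidef) :
    (matrixSqrt A).PosSemidef := by
  rw [matrixSqrt_eq_sqrt hA]
  exact Matrix.nonneg_iff_posSemidef.mp (CFC.sqrt_nonneg A)

end MatrixOrder

lemma Real.abs_sqrt_sub_one_le {a t : ℝ} (ha : 0 < a) (ha₁ : a ≤ 1) (hat : a ≤ t) :
    |√t - 1| ≤ |t - 1| / (2 * √a) := by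
  have hsum : 2 * √a ≤ √t + 1 := by
    linarith [Real.sqrt_le_sqrt hat, Real.sqrt_le_one.mpr ha₁]
  have hfactor : t - 1 = (√t - 1) * (√t + 1) := by
    linear_combination -(Real.sq_sqrt (ha.le.trans hat))
  rw [le_div_iff₀ (by positivity), hfactor, abs_mul, abs_of_pos (by positivity : 0 < √t + 1)]
  exact mul_le_mul_of_nonneg_left hsum (abs_nonneg _)

namespace Matrix

variable {m : Type*} [Fintype m] [DecidableEq m]

lemma toEuclideanLin_mul_apply (M N : Matrix m m ℝ) (v : EuclideanSpace ℝ m) :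
    toEuclideanLin (M * N) v = toEuclideanLin M (toEuclideanLin N v) := by
  simp

lemma norm_toEuclideanLin_apply_le (M : Matrix m m ℝ) (v : EuclideanSpace ℝ m) :
    ‖toEuclideanLin M v‖ ≤ ‖M‖ * ‖v‖ :=
  M.l2_opNorm_mulVec v

lemma inner_toEuclideanLin_mul_self {P : Matrix m m ℝ} (hP : P.IsHermitian)
    (v : EuclideanSpace ℝ m) :
    ⟪toEuclideanLin (P * P) v, v⟫ = ‖toEuclideanLin P v‖ ^ 2 := by
  rw [toEuclideanLin_mul_apply, isSymmetric_toEuclideanLin_iff.mpr hP,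
    real_inner_self_eq_norm_sq]

lemma inner_toEuclideanLin_conj {Q : Matrix m m ℝ} (hQ : Q.IsHermitian) (M : Matrix m m ℝ)
    (v : EuclideanSpace ℝ m) :
    ⟪toEuclideanLin (Q * M * Q) v, v⟫ =
      ⟪toEuclideanLin M (toEuclideanLin Q v), toEuclideanLin Q v⟫ := by
  rw [toEuclideanLin_mul_apply, toEuclideanLin_mul_apply, isSymmetric_toEuclideanLin_iff.mpr hQ]

lemma abs_inner_toEuclideanLin_sub_le (M N : Matrix m m ℝ) (v : EuclideanSpace ℝ m) :
    |⟪toEuclideanLin M v, v⟫ - ⟪toEuclideanLin N v, v⟫| ≤ ‖M - N‖ * ‖v‖ ^ 2 := by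
  rw [← inner_sub_left, ← LinearMap.sub_apply, ← map_sub, sq, ← mul_assoc]
  exact (abs_real_inner_le_norm _ _).trans
    (mul_le_mul_of_nonneg_right (norm_toEuclideanLin_apply_le _ _) (norm_nonneg _))

lemma norm_toEuclideanLin_le_sqrt_mul {P : Matrix m m ℝ} (hP : P.IsHermitian) {Lam : ℝ}
    {v : EuclideanSpace ℝ m} (h : ⟪toEuclideanLin (P * P) v, v⟫ ≤ Lam * ‖v‖ ^ 2) :
    ‖toEuclideanLin P v‖ ≤ √Lam * ‖v‖ := by
  rw [inner_toEuclideanLin_mul_self hP] at h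
  simpa [Real.sqrt_mul' _ (sq_nonneg _)] using Real.sqrt_le_sqrt h

lemma posDef_of_mul_norm_sq_le_inner {S : Matrix m m ℝ} (hS : S.IsHermitian) {lam : ℝ}
    (hlam : 0 < lam) (h : ∀ ξ, lam * ‖ξ‖ ^ 2 ≤ ⟪toEuclideanLin S ξ, ξ⟫) : S.PosDef := by
  refine .of_dotProduct_mulVec_pos hS fun v hv => ?_
  have hξ : 0 < ‖WithLp.toLp 2 v‖ := norm_pos_iff.mpr (by simpa using hv)
  have := (h (WithLp.toLp 2 v)).trans_lt' (by positivity)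
  simpa [EuclideanSpace.inner_eq_star_dotProduct, dotProduct_comm] using this

theorem abs_sqrt_inner_conj_inv_sub_one_le {lam Lam : ℝ} (hlam : 0 < lam) (hlamLam : lam ≤ Lam)
    {S T P : Matrix m m ℝ} (hP : P.IsHermitian) (hPS : P * P = S)
    (hS : ∀ ξ, lam * ‖ξ‖ ^ 2 ≤ ⟪toEuclideanLin S ξ, ξ⟫ ∧ ⟪toEuclideanLin S ξ, ξ⟫ ≤ Lam * ‖ξ‖ ^ 2)
    (hT : ∀ ξ, lam * ‖ξ‖ ^ 2 ≤ ⟪toEuclideanLin T ξ, ξ⟫) {ν : EuclideanSpace ℝ m} (hν : ‖ν‖ = 1) :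
    |√⟪toEuclideanLin (P⁻¹ * T * P⁻¹) ν, ν⟫ - 1| ≤ √Lam / (2 * lam * √lam) * ‖T - S‖ := by
  have hLam : 0 < Lam := hlam.trans_le hlamLam
  have hSpd : S.PosDef := by
    refine posDef_of_mul_norm_sq_le_inner ?_ hlam fun ξ => (hS ξ).1
    rw [← hPS, ← sq]
    exact hP.pow 2
  have hPdet : IsUnit P.det := by
    have hSdet : IsUnit (P.det * P.det) := by
      rw [← det_mul, hPS]
      exact (isUnit_iff_isUnit_det S).mp hSpd.isUnit
    exact (IsUnit.mul_iff.mp hSdet).1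
  set w := toEuclideanLin P⁻¹ ν
  have hPw : toEuclideanLin P w = ν := by
    rw [← toEuclideanLin_mul_apply, mul_nonsing_inv _ hPdet]
    simp
  have hSw : ⟪toEuclideanLin S w, w⟫ = 1 := by
    rw [← hPS, inner_toEuclideanLin_mul_self hP, hPw, hν, one_pow]
  have hw_le : lam * ‖w‖ ^ 2 ≤ 1 := hSw ▸ (hS w).1
  have hw_ge : 1 ≤ Lam * ‖w‖ ^ 2 := hSw ▸ (hS w).2
  rw [inner_toEuclideanLin_conj hP.inv]
  have hTw : lam / Lam ≤ ⟪toEuclideanLin T w, w⟫ := by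
    rw [div_le_iff₀ hLam]
    nlinarith [hT w]
  have hdiff : |⟪toEuclideanLin T w, w⟫ - 1| ≤ ‖T - S‖ / lam := by
    rw [← hSw, le_div_iff₀ hlam]
    nlinarith [abs_inner_toEuclideanLin_sub_le T S w, norm_nonneg (T - S)]
  calc _ ≤ |⟪toEuclideanLin T w, w⟫ - 1| / (2 * √(lam / Lam)) :=
        Real.abs_sqrt_sub_one_le (by positivity) ((div_le_one hLam).mpr hlamLam) hTw
    _ ≤ ‖T - S‖ / lam / (2 * √(lam / Lam)) := by gcongr
    _ = √Lam / (2 * lam * √lam) * ‖T - S‖ := by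
        rw [Real.sqrt_div' _ hLam.le]
        field_simp

end Matrix

theorem transformed_anisotropy_near_isotropy_general
    (n : ℕ) (lam Lam : ℝ) (hlam : 0 < lam) (hlamLam : lam ≤ Lam)
    (μ : ℝ) (hμ : μ ∈ Set.Ioc (0 : ℝ) 1) (M : ℝ) (hM : 0 ≤ M)
    (A : EuclideanSpace ℝ (Fin n) → Matrix (Fin n) (Fin n) ℝ)
    (hAsymm : ∀ x, (A x).IsSymm)
    (hAell : ∀ (x ξ : EuclideanSpace ℝ (Fin n)),
      lam * ‖ξ‖ ^ 2 ≤ ⟪Matrix.toEuclideanLin (A x) ξ, ξ⟫ ∧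
      ⟪Matrix.toEuclideanLin (A x) ξ, ξ⟫ ≤ Lam * ‖ξ‖ ^ 2)
    (hAholder : ∀ x y : EuclideanSpace ℝ (Fin n), ‖A x - A y‖ ≤ M * ‖x - y‖ ^ μ)
    (x₀ : EuclideanSpace ℝ (Fin n)) (r ρ : ℝ) (hr : 0 < r) (hρ : 0 < ρ)
    (B : EuclideanSpace ℝ (Fin n) → Matrix (Fin n) (Fin n) ℝ)
    (hB : ∀ y, B y = (matrixSqrt (A x₀))⁻¹ *
      A (x₀ + r • Matrix.toEuclideanLin (matrixSqrt (A x₀)) y) * (matrixSqrt (A x₀))⁻¹) :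
    ∀ x ν : EuclideanSpace ℝ (Fin n), ‖x‖ < ρ → ‖ν‖ = 1 →
      |Real.sqrt ⟪Matrix.toEuclideanLin (B x) ν, ν⟫ - 1| ≤
        Lam ^ ((μ + 1) / 2) / (2 * lam ^ ((3 : ℝ) / 2)) * M * (r * ρ) ^ μ := by
  intro x ν hx hν
  have hLam : 0 < Lam := hlam.trans_le hlamLam
  have hA₀ : (A x₀).PosSemidef :=
    (Matrix.posDef_of_mul_norm_sq_le_inner (Matrix.isHermitian_iff_isSymm.mpr (hAsymm x₀)) hlam
      fun ξ => (hAell x₀ ξ).1).posSemidef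
  rw [hB]
  set P := matrixSqrt (A x₀)
  have hP : P.IsHermitian := (posSemidef_matrixSqrt hA₀).isHermitian
  have hPP : P * P = A x₀ := matrixSqrt_mul_self hA₀
  set z := x₀ + r • Matrix.toEuclideanLin P x
  have hz : ‖z - x₀‖ ≤ √Lam * (r * ρ) := by
    have hPx := Matrix.norm_toEuclideanLin_le_sqrt_mul hP (hPP ▸ (hAell x₀ x).2)
    calc ‖z - x₀‖ = r * ‖Matrix.toEuclideanLin P x‖ := by
          rw [add_sub_cancel_left, norm_smul, Real.norm_of_nonneg hr.le]
      _ ≤ r * (√Lam * ρ) := by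
          gcongr
          exact hPx.trans (mul_le_mul_of_nonneg_left hx.le (Real.sqrt_nonneg _))
      _ = √Lam * (r * ρ) := by ring
  have hholder : ‖A z - A x₀‖ ≤ M * (Lam ^ (μ / 2) * (r * ρ) ^ μ) :=
    calc _ ≤ M * ‖z - x₀‖ ^ μ := hAholder _ _
      _ ≤ M * (√Lam * (r * ρ)) ^ μ := by gcongr; exact hμ.1.le
      _ = M * (Lam ^ (μ / 2) * (r * ρ) ^ μ) := by
        rw [Real.mul_rpow (by positivity) (by positivity), Real.sqrt_eq_rpow,
          ← Real.rpow_mul hLam.le, one_div_mul_eq_div]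
  calc _ ≤ √Lam / (2 * lam * √lam) * ‖A z - A x₀‖ :=
        Matrix.abs_sqrt_inner_conj_inv_sub_one_le hlam hlamLam hP hPP (hAell x₀)
          (fun ξ => (hAell z ξ).1) hν
    _ ≤ √Lam / (2 * lam * √lam) * (M * (Lam ^ (μ / 2) * (r * ρ) ^ μ)) := by gcongr
    _ = _ := by
      rw [show (μ + 1) / 2 = μ / 2 + 1 / 2 by ring, Real.rpow_add hLam,
        show (3 : ℝ) / 2 = 1 + 1 / 2 by norm_num, Real.rpow_add hlam, Real.rpow_one,
        ← Real.sqrt_eq_rpow, ← Real.sqrt_eq_rpow]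
      ring

/-- Pointwise near-isotropy of the transformed anisotropy
`B(y) = A(x₀)^{−1/2} A(x₀ + r A(x₀)^{1/2} y) A(x₀)^{−1/2}`: for `|x| < ρ` and `|ν| = 1`,
`|⟨B(x)ν, ν⟩^{1/2} − 1| ≤ (Λ^{(μ+1)/2}/(2λ^{3/2})) M (rρ)^μ`. -/
theorem transformed_anisotropy_near_isotropy
    (n : ℕ) (hn : 1 ≤ n) (lam Lam : ℝ) (hlam : 0 < lam) (hlamLam : lam ≤ Lam)
    (μ : ℝ) (hμ : μ ∈ Set.Ioc (0 : ℝ) 1) (M : ℝ) (hM : 0 ≤ M)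
    (A : EuclideanSpace ℝ (Fin n) → Matrix (Fin n) (Fin n) ℝ)
    (hAsymm : ∀ x, (A x).IsSymm)
    (hAell : ∀ (x ξ : EuclideanSpace ℝ (Fin n)),
      lam * ‖ξ‖ ^ 2 ≤ ⟪Matrix.toEuclideanLin (A x) ξ, ξ⟫ ∧
      ⟪Matrix.toEuclideanLin (A x) ξ, ξ⟫ ≤ Lam * ‖ξ‖ ^ 2)
    (hAholder : ∀ x y : EuclideanSpace ℝ (Fin n), ‖A x - A y‖ ≤ M * ‖x - y‖ ^ μ)
    (x₀ : EuclideanSpace ℝ (Fin n)) (r ρ : ℝ) (hr : 0 < r) (hρ : 0 < ρ)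
    (B : EuclideanSpace ℝ (Fin n) → Matrix (Fin n) (Fin n) ℝ)
    (hB : ∀ y, B y = (matrixSqrt (A x₀))⁻¹ *
      A (x₀ + r • Matrix.toEuclideanLin (matrixSqrt (A x₀)) y) * (matrixSqrt (A x₀))⁻¹) :
    ∀ x ν : EuclideanSpace ℝ (Fin n), ‖x‖ < ρ → ‖ν‖ = 1 →
      |Real.sqrt ⟪Matrix.toEuclideanLin (B x) ν, ν⟫ - 1| ≤
        Lam ^ ((μ + 1) / 2) / (2 * lam ^ ((3 : ℝ) / 2)) * M * (r * ρ) ^ μ :=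
  transformed_anisotropy_near_isotropy_general n lam Lam hlam hlamLam μ hμ M hM A hAsymm hAell
    hAholder x₀ r ρ hr hρ B hB
end

section
/- Let n ≥ 1 and let X : ℝⁿ → ℝⁿ be a continuously differentiable vector field with compact support, and set L := sup_{x∈ℝⁿ} ‖DX(x)‖ (operator norm). Define Φ_t(x) := x + tX(x). Then for every t ∈ ℝ with |t| < 1/(2(1+L)): (i) Φ_t is a bijection of ℝⁿ onto itself which coincides with the identity outside the support of X, and its inverse Φ_t^{−1} is continuously differentiable; (ii) for every x ∈ ℝⁿ, ‖DΦ_t^{−1}(Φ_t(x)) − I + t·DX(x)‖ ≤ 2t²L². -/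
/-!
Write `Φ_t = id + t • X`. By the mean value theorem `X` is `L`-Lipschitz, so for `|t| L < 1` the map
`Φ_t` is a Lipschitz perturbation of the identity and hence a homeomorphism of the whole space.
Its derivative `1 + a`, `a = t • DX(x)`, is invertible by the Neumann series, so `Φ_t⁻¹` is `C¹`
with derivative `(1 + a)⁻¹` at `Φ_t x`, and `(1 + a)⁻¹ - (1 - a) = (1 + a)⁻¹ a²` has norm at most
`‖a‖² / (1 - ‖a‖) ≤ 2 ‖a‖²` once `‖a‖ ≤ 1/2`.
-/

open Function Set NNReal

theorem Units.norm_inv_sub_one_sub_le {R : Type*} [NormedRing R] (u : Rˣ) {a : R}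
    (hu : (u : R) = 1 + a) (ha : ‖a‖ ≤ 1 / 2) :
    ‖(↑u⁻¹ : R) - (1 - a)‖ ≤ 2 * ‖a‖ ^ 2 := by
  set D := (↑u⁻¹ : R) - (1 - a)
  -- bounding `D` through `D = a² - D a` avoids any estimate of `‖u⁻¹‖` or `‖1‖`
  have hD : D = a * a - D * a := by
    have h : D * (u : R) = a * a := by
      rw [sub_mul, Units.inv_mul, hu]; noncomm_ring
    rw [hu, mul_add, mul_one] at h
    rw [← h]; abel
  have h : ‖D‖ ≤ ‖a‖ ^ 2 + ‖D‖ * ‖a‖ :=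
    calc ‖D‖ = ‖a * a - D * a‖ := by rw [← hD]
      _ ≤ ‖a‖ * ‖a‖ + ‖D‖ * ‖a‖ :=
        (norm_sub_le _ _).trans (add_le_add (norm_mul_le _ _) (norm_mul_le _ _))
      _ = ‖a‖ ^ 2 + ‖D‖ * ‖a‖ := by ring
  nlinarith [norm_nonneg D, norm_nonneg a]

section

variable {𝕜 E : Type*} [NontriviallyNormedField 𝕜] [NormedAddCommGroup E] [NormedSpace 𝕜 E]

theorem norm_fderiv_le_iSup_of_hasCompactSupport {F : Type*} [NormedAddCommGroup F]
    [NormedSpace 𝕜 F] {X : E → F} (hX : ContDiff 𝕜 1 X) (hXsupp : HasCompactSupport X) (x : E) :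
    ‖fderiv 𝕜 X x‖ ≤ ⨆ y, ‖fderiv 𝕜 X y‖ :=
  le_ciSup ((hX.continuous_fderiv one_ne_zero).norm.bddAbove_range_of_hasCompactSupport
    (hXsupp.fderiv 𝕜).norm) x

theorem approximatesLinearOn_add_smul {X : E → E} {K : ℝ≥0} (hX : LipschitzWith K X) (t : 𝕜) :
    ApproximatesLinearOn (fun x ↦ x + t • X x) (ContinuousLinearEquiv.refl 𝕜 E : E →L[𝕜] E)
      univ (‖t‖₊ * K) := by
  refine LipschitzOnWith.approximatesLinearOn ?_
  have : ((fun x ↦ x + t • X x) - ⇑(ContinuousLinearEquiv.refl 𝕜 E : E →L[𝕜] E))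
      = (t • ·) ∘ X := by
    ext x; simp
  rw [this]
  exact ((lipschitzWith_smul t).comp hX).lipschitzOnWith

theorem exists_homeomorph_add_smul [CompleteSpace E] {X : E → E} {K : ℝ≥0}
    (hX : LipschitzWith K X) {t : 𝕜} (ht : ‖t‖₊ * K < 1) :
    ∃ Φ : E ≃ₜ E, ⇑Φ = fun x ↦ x + t • X x := by
  refine ⟨(approximatesLinearOn_add_smul hX t).toHomeomorph _ ?_, rfl⟩
  rcases subsingleton_or_nontrivial E with hE | hE
  · exact Or.inl hE
  · right
    simpa using ht

theorem exists_continuousLinearEquiv_one_add [CompleteSpace E] {a : E →L[𝕜] E}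
    (ha : ‖a‖ ≤ 1 / 2) :
    ∃ e : E ≃L[𝕜] E, (e : E →L[𝕜] E) = 1 + a ∧ ‖(e.symm : E →L[𝕜] E) - (1 - a)‖ ≤ 2 * ‖a‖ ^ 2 := by
  have hu : ‖-a‖ < 1 := by rw [norm_neg]; linarith
  have hval : (Units.oneSub (-a) hu : E →L[𝕜] E) = 1 + a := sub_neg_eq_add 1 a
  exact ⟨.ofUnit (Units.oneSub (-a) hu), hval,
    (Units.oneSub (-a) hu).norm_inv_sub_one_sub_le hval ha⟩

theorem Homeomorph.hasFDerivAt_symm {F : Type*} [NormedAddCommGroup F] [NormedSpace 𝕜 F]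
    (Φ : E ≃ₜ F) {f' : E ≃L[𝕜] F} {x : E} (h : HasFDerivAt Φ (f' : E →L[𝕜] F) x) :
    HasFDerivAt Φ.symm (f'.symm : F →L[𝕜] E) (Φ x) :=
  HasFDerivAt.of_local_left_inverse Φ.symm.continuous.continuousAt
    (by rwa [Φ.symm_apply_apply]) (.of_forall Φ.apply_symm_apply)

end

theorem flow_map_inverse_derivative_expansion_general
    (n : ℕ)
    (X : EuclideanSpace ℝ (Fin n) → EuclideanSpace ℝ (Fin n))
    (hX : ContDiff ℝ 1 X) (hXsupp : HasCompactSupport X)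
    (L : ℝ) (hL : L = ⨆ x, ‖fderiv ℝ X x‖)
    (t : ℝ) (ht : |t| < 1 / (2 * (1 + L))) :
    Function.Bijective (fun x => x + t • X x) ∧
    (∀ x ∉ tsupport X, x + t • X x = x) ∧
    ContDiff ℝ 1 (Function.invFun (fun x : EuclideanSpace ℝ (Fin n) => x + t • X x)) ∧
    ∀ x : EuclideanSpace ℝ (Fin n),
      ‖fderiv ℝ (Function.invFun (fun x : EuclideanSpace ℝ (Fin n) => x + t • X x))
          (x + t • X x) -
        (ContinuousLinearMap.id ℝ (EuclideanSpace ℝ (Fin n)) - t • fderiv ℝ X x)‖ ≤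
      2 * t ^ 2 * L ^ 2 := by
  have hbound : ∀ x, ‖fderiv ℝ X x‖ ≤ L := hL ▸ norm_fderiv_le_iSup_of_hasCompactSupport hX hXsupp
  have hL0 : 0 ≤ L := (norm_nonneg _).trans (hbound 0)
  have htL : |t| * L < 1 / 2 := by
    rw [lt_div_iff₀ (by positivity)] at ht
    nlinarith [abs_nonneg t]
  have hsmall (x) : ‖t • fderiv ℝ X x‖ ≤ |t| * L := by
    rw [norm_smul, Real.norm_eq_abs]
    exact mul_le_mul_of_nonneg_left (hbound x) (abs_nonneg t)
  obtain ⟨Φ, hΦ⟩ := exists_homeomorph_add_smul (K := ⟨L, hL0⟩)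
    (lipschitzWith_of_nnnorm_fderiv_le (hX.differentiable one_ne_zero) hbound)
    (t := t) (by exact_mod_cast htL.trans one_half_lt_one)
  choose e he_coe he_symm using fun x ↦ exists_continuousLinearEquiv_one_add
    ((hsmall x).trans htL.le)
  have hderiv (x) : HasFDerivAt Φ (e x : _ →L[ℝ] _) x := by
    rw [hΦ, he_coe, ContinuousLinearMap.one_def]
    exact (hasFDerivAt_id x).add ((hX.differentiable one_ne_zero x).hasFDerivAt.const_smul t)
  have hinv : invFun (fun x ↦ x + t • X x) = Φ.symm :=
    hΦ ▸ invFun_eq_of_injective_of_rightInverse Φ.injective Φ.apply_symm_apply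
  refine ⟨hΦ ▸ Φ.bijective, fun x hx ↦ ?_, hinv ▸ Φ.contDiff_symm hderiv ?_, fun x ↦ ?_⟩
  · rw [image_eq_zero_of_notMem_tsupport hx, smul_zero, add_zero]
  · exact hΦ ▸ contDiff_id.add (hX.const_smul t)
  · rw [hinv, show x + t • X x = Φ x by rw [hΦ], (Φ.hasFDerivAt_symm (hderiv x)).fderiv]
    calc _ ≤ 2 * ‖t • fderiv ℝ X x‖ ^ 2 := he_symm x
      _ ≤ 2 * (|t| * L) ^ 2 := by gcongr; exact hsmall x
      _ = 2 * t ^ 2 * L ^ 2 := by rw [mul_pow, sq_abs]; ring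

/-- For a `C¹` compactly supported vector field `X` with
`L = sup ‖DX‖`, and `|t| < 1/(2(1+L))`, the flow map `Φ_t(x) = x + tX(x)` is a bijection
of `ℝⁿ` equal to the identity outside the support of `X`, its inverse is `C¹`, and
`‖DΦ_t⁻¹(Φ_t x) − I + t·DX(x)‖ ≤ 2t²L²` for every `x`. -/
theorem flow_map_inverse_derivative_expansion
    (n : ℕ) (hn : 1 ≤ n)
    (X : EuclideanSpace ℝ (Fin n) → EuclideanSpace ℝ (Fin n))
    (hX : ContDiff ℝ 1 X) (hXsupp : HasCompactSupport X)
    (L : ℝ) (hL : L = ⨆ x, ‖fderiv ℝ X x‖)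
    (t : ℝ) (ht : |t| < 1 / (2 * (1 + L))) :
    Function.Bijective (fun x => x + t • X x) ∧
    (∀ x ∉ tsupport X, x + t • X x = x) ∧
    ContDiff ℝ 1 (Function.invFun (fun x : EuclideanSpace ℝ (Fin n) => x + t • X x)) ∧
    ∀ x : EuclideanSpace ℝ (Fin n),
      ‖fderiv ℝ (Function.invFun (fun x : EuclideanSpace ℝ (Fin n) => x + t • X x))
          (x + t • X x) -
        (ContinuousLinearMap.id ℝ (EuclideanSpace ℝ (Fin n)) - t • fderiv ℝ X x)‖ ≤
      2 * t ^ 2 * L ^ 2 :=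
  flow_map_inverse_derivative_expansion_general n X hX hXsupp L hL t ht
end

section
/- Let n ≥ 1, r > 0 and σ ∈ (0, 2^{−n}), and let f be the map defined by f(x) = (1 − σ(2ⁿ − 1))x if |x| < r/2; f(x) = x + σ(1 − rⁿ/|x|ⁿ)x if r/2 ≤ |x| < r; f(x) = x if |x| ≥ r. Then f is a bijection of ℝⁿ onto itself, f(B_r) = B_r where B_r is the open ball of radius r centered at the origin, f(x) = x for all |x| ≥ r, and both f and f^{−1} are Lipschitz continuous. -/
/-- The volume-adjusting bi-Lipschitz map of the penalization argument:
`f(x) = (1 − σ(2ⁿ − 1))x` if `|x| < r/2`; `f(x) = x + σ(1 − rⁿ/|x|ⁿ)x` if `r/2 ≤ |x| < r`;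
`f(x) = x` if `|x| ≥ r`. -/
noncomputable def volMap (n : ℕ) (r σ : ℝ) (x : EuclideanSpace ℝ (Fin n)) :
    EuclideanSpace ℝ (Fin n) :=
  if ‖x‖ < r / 2 then (1 - σ * (2 ^ n - 1)) • x
  else if ‖x‖ < r then x + (σ * (1 - r ^ n / ‖x‖ ^ n)) • x
  else x

/-!
`volMap` is the radial map `x ↦ g(|x|) x` whose factor satisfies `A ≤ g ≤ 1`, where
`A = 1 − σ(2ⁿ − 1) > 0`. Its profile `t ↦ t g(t)` is continuous and piecewise smooth, and by the
mean value theorem on the middle piece all its difference quotients lie in `[A, 1 + σ + nσ2ⁿ]`.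
The identity `‖b x − c y‖² = (|x| b − |y| c)² + b c (‖x − y‖² − (|x| − |y|)²)` turns these bounds
on the profile into `A‖x − y‖ ≤ ‖f x − f y‖ ≤ (1 + σ + nσ2ⁿ)‖x − y‖`. The profile is onto
`[0, ∞)` by the intermediate value theorem, so `f` is onto; the profile is also strictly
increasing and fixes `r`, so `|f x| < r ↔ |x| < r`.
-/

open Set Metric Function

def SlopeBoundedOn (h : ℝ → ℝ) (a K : ℝ) (S : Set ℝ) : Prop :=
  ∀ s ∈ S, ∀ t ∈ S, s ≤ t → a * (t - s) ≤ h t - h s ∧ h t - h s ≤ K * (t - s)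

namespace SlopeBoundedOn

variable {h h' : ℝ → ℝ} {a K : ℝ} {S : Set ℝ}

lemma congr (hh : SlopeBoundedOn h a K S) (heq : EqOn h h' S) : SlopeBoundedOn h' a K S := by
  intro s hs t ht hst
  rw [← heq hs, ← heq ht]
  exact hh s hs t ht hst

lemma union_Ici {p q : ℝ} (h₁ : SlopeBoundedOn h a K (Icc p q))
    (h₂ : SlopeBoundedOn h a K (Ici q)) : SlopeBoundedOn h a K (Ici p) := by
  intro s hs t ht hst
  rcases le_total t q with htq | hqt
  · exact h₁ s ⟨hs, hst.trans htq⟩ t ⟨ht, htq⟩ hst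
  rcases le_total q s with hqs | hsq
  · exact h₂ s hqs t (hqs.trans hst) hst
  obtain ⟨hl₁, hu₁⟩ := h₁ s ⟨hs, hsq⟩ q ⟨hs.trans hsq, le_rfl⟩ hsq
  obtain ⟨hl₂, hu₂⟩ := h₂ q self_mem_Ici t hqt hqt
  constructor <;> linarith

lemma abs_sub_bounds (hh : SlopeBoundedOn h a K S) (ha : 0 ≤ a) {s t : ℝ} (hs : s ∈ S)
    (ht : t ∈ S) :
    a * |t - s| ≤ |h t - h s| ∧ |h t - h s| ≤ K * |t - s| := by
  wlog hst : s ≤ t generalizing s t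
  · rw [abs_sub_comm t, abs_sub_comm (h t)]
    exact this ht hs (le_of_not_ge hst)
  obtain ⟨hl, hu⟩ := hh s hs t ht hst
  rw [abs_of_nonneg (sub_nonneg.2 hst),
    abs_of_nonneg ((mul_nonneg ha (sub_nonneg.2 hst)).trans hl)]
  exact ⟨hl, hu⟩

lemma continuousOn (hh : SlopeBoundedOn h a K S) (ha : 0 ≤ a) : ContinuousOn h S := by
  refine (LipschitzOnWith.of_dist_le_mul (K := K.toNNReal) fun t ht s hs => ?_).continuousOn
  rw [Real.dist_eq, Real.dist_eq]
  exact (hh.abs_sub_bounds ha hs ht).2.trans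
    (mul_le_mul_of_nonneg_right (Real.le_coe_toNNReal K) (abs_nonneg _))

lemma strictMonoOn (hh : SlopeBoundedOn h a K S) (ha : 0 < a) : StrictMonoOn h S :=
  fun s hs t ht hst => by
    have := (hh s hs t ht hst.le).1
    nlinarith [mul_pos ha (sub_pos.2 hst)]

lemma surjOn_Ici (hh : SlopeBoundedOn h a K (Ici 0)) (ha : 0 < a) (h0 : h 0 = 0) :
    SurjOn h (Ici 0) (Ici 0) := by
  intro s (hs : 0 ≤ s)
  have hsa : 0 ≤ s / a := div_nonneg hs ha.le
  have hle : s ≤ h (s / a) := by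
    have := (hh 0 self_mem_Ici (s / a) hsa hsa).1
    rwa [h0, sub_zero, sub_zero, mul_div_cancel₀ _ ha.ne'] at this
  obtain ⟨t, ht, rfl⟩ := intermediate_value_Icc hsa
    ((hh.continuousOn ha.le).mono Icc_subset_Ici_self) ⟨h0.le.trans hs, hle⟩
  exact ⟨t, ht.1, rfl⟩

end SlopeBoundedOn

lemma slopeBoundedOn_const_mul {a c K : ℝ} (hac : a ≤ c) (hcK : c ≤ K) (S : Set ℝ) :
    SlopeBoundedOn (c * ·) a K S := fun s _ t _ hst => by
  rw [← mul_sub]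
  exact ⟨mul_le_mul_of_nonneg_right hac (sub_nonneg.2 hst),
    mul_le_mul_of_nonneg_right hcK (sub_nonneg.2 hst)⟩

lemma slopeBoundedOn_of_deriv {h : ℝ → ℝ} {a K : ℝ} {D : Set ℝ} (hD : Convex ℝ D)
    (hc : ContinuousOn h D) (hd : DifferentiableOn ℝ h (interior D))
    (hderiv : ∀ t ∈ interior D, a ≤ deriv h t ∧ deriv h t ≤ K) : SlopeBoundedOn h a K D :=
  fun s hs t ht hst =>
    ⟨hD.mul_sub_le_image_sub_of_le_deriv hc hd (fun x hx => (hderiv x hx).1) s hs t ht hst,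
      hD.image_sub_le_mul_sub_of_deriv_le hc hd (fun x hx => (hderiv x hx).2) s hs t ht hst⟩

section RadialMap

variable {E : Type*} [NormedAddCommGroup E]

def radialMap [NormedSpace ℝ E] (g : ℝ → ℝ) (x : E) : E := g ‖x‖ • x

section NormedSpace

variable [NormedSpace ℝ E] {g : ℝ → ℝ}

lemma norm_radialMap {x : E} (hg : 0 ≤ g ‖x‖) : ‖radialMap g x‖ = ‖x‖ * g ‖x‖ := by
  rw [radialMap, norm_smul, Real.norm_of_nonneg hg, mul_comm]

lemma radialMap_surjective (hg : SurjOn (fun t => t * g t) (Ici 0) (Ici 0)) :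
    Surjective (radialMap g : E → E) := by
  intro y
  obtain ⟨t, ht, hty⟩ := hg (norm_nonneg y)
  rcases eq_or_ne y 0 with rfl | hy
  · exact ⟨0, by simp [radialMap]⟩
  have hy' : ‖y‖ ≠ 0 := norm_ne_zero_iff.2 hy
  refine ⟨(t / ‖y‖) • y, ?_⟩
  have hnorm : ‖(t / ‖y‖) • y‖ = t := by
    rw [norm_smul, Real.norm_of_nonneg (div_nonneg ht (norm_nonneg y)), div_mul_cancel₀ _ hy']
  rw [radialMap, hnorm, smul_smul, ← mul_div_assoc, mul_comm (g t), show t * g t = ‖y‖ from hty,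
    div_self hy', one_smul]

lemma preimage_radialMap_ball {r : ℝ} (hr : 0 ≤ r) (hg : ∀ t, 0 ≤ t → 0 ≤ g t) (hgr : g r = 1)
    (hmono : StrictMonoOn (fun t => t * g t) (Ici 0)) :
    radialMap g ⁻¹' ball (0 : E) r = ball 0 r := by
  ext x
  have := hmono.lt_iff_lt (norm_nonneg x) hr
  simp only [hgr, mul_one] at this
  simp only [mem_preimage, mem_ball_zero_iff, norm_radialMap (hg _ (norm_nonneg x)), this]

end NormedSpace

section InnerProductSpace

variable [InnerProductSpace ℝ E] {g : ℝ → ℝ} {a K : ℝ}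

lemma norm_smul_sub_smul_sq (b c : ℝ) (x y : E) :
    ‖b • x - c • y‖ ^ 2 =
      (‖x‖ * b - ‖y‖ * c) ^ 2 + b * c * (‖x - y‖ ^ 2 - (‖x‖ - ‖y‖) ^ 2) := by
  rw [norm_sub_sq_real, norm_sub_sq_real, norm_smul, norm_smul, real_inner_smul_left,
    real_inner_smul_right, mul_pow, mul_pow, Real.norm_eq_abs, Real.norm_eq_abs, sq_abs, sq_abs]
  ring

lemma dist_radialMap_bounds (ha : 0 ≤ a) (hg : ∀ t, 0 ≤ t → a ≤ g t ∧ g t ≤ K)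
    (hh : SlopeBoundedOn (fun t => t * g t) a K (Ici 0)) (x y : E) :
    a * dist x y ≤ dist (radialMap g x) (radialMap g y) ∧
      dist (radialMap g x) (radialMap g y) ≤ K * dist x y := by
  obtain ⟨hax, hxK⟩ := hg ‖x‖ (norm_nonneg x)
  obtain ⟨hay, hyK⟩ := hg ‖y‖ (norm_nonneg y)
  obtain ⟨hl, hu⟩ := hh.abs_sub_bounds ha (norm_nonneg y) (norm_nonneg x)
  have hK : 0 ≤ K := ha.trans (hax.trans hxK)
  have hD : 0 ≤ ‖x - y‖ ^ 2 - (‖x‖ - ‖y‖) ^ 2 :=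
    sub_nonneg.2 (sq_le_sq.2 (by rw [abs_norm]; exact abs_norm_sub_norm_le x y))
  have hl2 := pow_le_pow_left₀ (mul_nonneg ha (abs_nonneg _)) hl 2
  have hu2 := pow_le_pow_left₀ (abs_nonneg _) hu 2
  simp only [mul_pow, sq_abs] at hl2 hu2
  have hgl := mul_le_mul_of_nonneg_right (mul_le_mul hax hay ha (ha.trans hax)) hD
  have hgu := mul_le_mul_of_nonneg_right (mul_le_mul hxK hyK (ha.trans hay) hK) hD
  have key := norm_smul_sub_smul_sq (g ‖x‖) (g ‖y‖) x y
  rw [dist_eq_norm, dist_eq_norm, radialMap, radialMap]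
  constructor
  · refine (pow_le_pow_iff_left₀ (mul_nonneg ha (norm_nonneg _)) (norm_nonneg _)
      two_ne_zero).1 ?_
    rw [key, mul_pow]
    nlinarith
  · refine (pow_le_pow_iff_left₀ (norm_nonneg _) (mul_nonneg hK (norm_nonneg _))
      two_ne_zero).1 ?_
    rw [key, mul_pow]
    nlinarith

lemma lipschitzWith_radialMap (ha : 0 ≤ a) (hg : ∀ t, 0 ≤ t → a ≤ g t ∧ g t ≤ K)
    (hh : SlopeBoundedOn (fun t => t * g t) a K (Ici 0)) :
    LipschitzWith K.toNNReal (radialMap g : E → E) :=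
  LipschitzWith.of_dist_le_mul fun x y =>
    (dist_radialMap_bounds ha hg hh x y).2.trans
      (mul_le_mul_of_nonneg_right (Real.le_coe_toNNReal K) dist_nonneg)

lemma antilipschitzWith_radialMap (ha : 0 < a) (hg : ∀ t, 0 ≤ t → a ≤ g t ∧ g t ≤ K)
    (hh : SlopeBoundedOn (fun t => t * g t) a K (Ici 0)) :
    AntilipschitzWith a⁻¹.toNNReal (radialMap g : E → E) :=
  AntilipschitzWith.of_le_mul_dist fun x y => by
    rw [Real.coe_toNNReal _ (inv_nonneg.2 ha.le), le_inv_mul_iff₀ ha]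
    exact (dist_radialMap_bounds ha.le hg hh x y).1

end InnerProductSpace

end RadialMap

noncomputable def volFactor (n : ℕ) (r σ t : ℝ) : ℝ :=
  if t < r / 2 then 1 - σ * (2 ^ n - 1) else if t < r then 1 + σ * (1 - r ^ n / t ^ n) else 1

lemma volMap_eq_radialMap (n : ℕ) (r σ : ℝ) : volMap n r σ = radialMap (volFactor n r σ) := by
  funext x
  simp only [volMap, radialMap, volFactor]
  split_ifs <;> simp only [add_smul, one_smul]

section VolFactor

variable {n : ℕ} {r σ : ℝ}

lemma pow_div_pow_le_two_pow {t : ℝ} (hr : 0 < r) (ht : r / 2 ≤ t) : r ^ n / t ^ n ≤ 2 ^ n := by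
  have ht0 : 0 < t := by linarith
  rw [← div_pow]
  exact pow_le_pow_left₀ (div_nonneg hr.le ht0.le) ((div_le_iff₀ ht0).2 (by linarith)) n

lemma volFactor_of_le_half {t : ℝ} (hr : 0 < r) (ht : t ≤ r / 2) :
    volFactor n r σ t = 1 - σ * (2 ^ n - 1) := by
  rcases ht.lt_or_eq with ht | rfl
  · exact if_pos ht
  have h2r : r ^ n / (r / 2) ^ n = 2 ^ n := by
    rw [div_pow, div_div_cancel₀ (pow_ne_zero n hr.ne')]
  rw [volFactor, if_neg (lt_irrefl _), if_pos (by linarith), h2r]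
  ring

lemma volFactor_of_le {t : ℝ} (hr : 0 < r) (ht : r ≤ t) : volFactor n r σ t = 1 := by
  rw [volFactor, if_neg (by linarith), if_neg (not_lt.2 ht)]

lemma volFactor_mem_Icc (hr : 0 < r) (hσ : 0 ≤ σ) (t : ℝ) :
    volFactor n r σ t ∈ Icc (1 - σ * (2 ^ n - 1)) 1 := by
  have h2n : (1 : ℝ) ≤ 2 ^ n := one_le_pow₀ one_le_two
  unfold volFactor
  split_ifs with h₁ h₂
  · exact ⟨le_rfl, by nlinarith⟩
  · have ht : 0 < t := by linarith
    have hle := pow_div_pow_le_two_pow (n := n) hr (not_lt.1 h₁)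
    have hge : 1 ≤ r ^ n / t ^ n :=
      (one_le_div (pow_pos ht n)).2 (pow_le_pow_left₀ ht.le h₂.le n)
    constructor <;> nlinarith
  · exact ⟨by nlinarith, le_rfl⟩

lemma hasDerivAt_volProfile_mid {t : ℝ} (ht : t ≠ 0) :
    HasDerivAt (fun t => (1 + σ) * t - σ * r ^ n * t ^ (1 - (n : ℤ)))
      (1 + σ * (1 - r ^ n / t ^ n) + n * σ * (r ^ n / t ^ n)) t := by
  refine (((hasDerivAt_id t).const_mul (1 + σ)).sub
    ((hasDerivAt_zpow (1 - (n : ℤ)) t (Or.inl ht)).const_mul (σ * r ^ n))).congr_deriv ?_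
  rw [show (1 : ℤ) - n - 1 = -(n : ℤ) by ring, zpow_neg, zpow_natCast]
  push_cast
  ring

lemma volProfile_eq_mid {t : ℝ} (hr : 0 < r) (ht : t ∈ Icc (r / 2) r) :
    t * volFactor n r σ t = (1 + σ) * t - σ * r ^ n * t ^ (1 - (n : ℤ)) := by
  have ht0 : t ≠ 0 := by linarith [ht.1]
  have hmid : (1 + σ) * t - σ * r ^ n * t ^ (1 - (n : ℤ)) =
      t * (1 + σ * (1 - r ^ n / t ^ n)) := by
    rw [zpow_sub₀ ht0, zpow_one, zpow_natCast]
    ring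
  rw [hmid]
  rcases ht.2.lt_or_eq with htr | rfl
  · rw [volFactor, if_neg (not_lt.2 ht.1), if_pos htr]
  · rw [volFactor_of_le hr le_rfl, div_self (pow_ne_zero n ht0)]
    ring

lemma slopeBoundedOn_volProfile (hr : 0 < r) (hσ : 0 ≤ σ) :
    SlopeBoundedOn (fun t => t * volFactor n r σ t) (1 - σ * (2 ^ n - 1))
      (1 + σ + n * σ * 2 ^ n) (Ici 0) := by
  have hA1 : 1 - σ * (2 ^ n - 1) ≤ 1 := by nlinarith [one_le_pow₀ (M₀ := ℝ) (n := n) one_le_two]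
  have hK1 : (1 : ℝ) ≤ 1 + σ + n * σ * 2 ^ n :=
    le_add_of_le_of_nonneg (le_add_of_nonneg_right hσ) (by positivity)
  refine SlopeBoundedOn.union_Ici (q := r / 2) ?_ (SlopeBoundedOn.union_Ici (q := r) ?_ ?_)
  · refine (slopeBoundedOn_const_mul le_rfl (hA1.trans hK1) _).congr fun t ht => ?_
    simp only [volFactor_of_le_half hr ht.2, mul_comm]
  · refine (slopeBoundedOn_of_deriv (convex_Icc _ _) (fun t ht => ?_) (fun t ht => ?_)
      (fun t ht => ?_)).congr fun t ht => (volProfile_eq_mid hr ht).symm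
    · exact (hasDerivAt_volProfile_mid (by linarith [ht.1])).continuousAt.continuousWithinAt
    · rw [interior_Icc] at ht
      exact (hasDerivAt_volProfile_mid (by linarith [ht.1])).differentiableAt.differentiableWithinAt
    · rw [interior_Icc] at ht
      rw [(hasDerivAt_volProfile_mid (by linarith [ht.1])).deriv]
      have hle := pow_div_pow_le_two_pow (n := n) hr ht.1.le
      have hge : 0 ≤ r ^ n / t ^ n :=
        div_nonneg (pow_nonneg hr.le n) (pow_nonneg (by linarith [ht.1]) n)
      have hn : (0 : ℝ) ≤ n * σ := by positivity
      constructor <;> nlinarith [mul_le_mul_of_nonneg_left hle hn, mul_nonneg hn hge]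
  · refine (slopeBoundedOn_const_mul hA1 hK1 _).congr fun t ht => ?_
    simp only [volFactor_of_le hr ht, mul_one, one_mul]

end VolFactor

theorem volMap_biLipschitz_bijection_general
    (n : ℕ) (r σ : ℝ) (hr : 0 < r) (hσ : σ ∈ Set.Ioo (0 : ℝ) (2 ^ n)⁻¹) :
    Function.Bijective (volMap n r σ) ∧
    volMap n r σ '' Metric.ball (0 : EuclideanSpace ℝ (Fin n)) r =
      Metric.ball (0 : EuclideanSpace ℝ (Fin n)) r ∧
    (∀ x : EuclideanSpace ℝ (Fin n), r ≤ ‖x‖ → volMap n r σ x = x) ∧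
    (∃ K : NNReal, LipschitzWith K (volMap n r σ)) ∧
    (∃ K' : NNReal, LipschitzWith K' (Function.invFun (volMap n r σ))) := by
  obtain ⟨hσ0, hσ1⟩ := hσ
  have hA : 0 < 1 - σ * (2 ^ n - 1) := by
    have := (lt_div_iff₀ (by positivity : (0 : ℝ) < 2 ^ n)).1 (by rwa [one_div])
    nlinarith
  have hg t (_ : 0 ≤ t) :
      1 - σ * (2 ^ n - 1) ≤ volFactor n r σ t ∧ volFactor n r σ t ≤ 1 + σ + n * σ * 2 ^ n :=
    ⟨(volFactor_mem_Icc hr hσ0.le t).1, (volFactor_mem_Icc hr hσ0.le t).2.trans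
      (le_add_of_le_of_nonneg (le_add_of_nonneg_right hσ0.le) (by positivity))⟩
  have hh := slopeBoundedOn_volProfile (n := n) hr hσ0.le
  have hsurj : Surjective (radialMap (volFactor n r σ) : EuclideanSpace ℝ (Fin n) → _) :=
    radialMap_surjective (hh.surjOn_Ici hA (zero_mul _))
  have hanti := antilipschitzWith_radialMap (E := EuclideanSpace ℝ (Fin n)) hA hg hh
  have hball := preimage_radialMap_ball (E := EuclideanSpace ℝ (Fin n)) hr.le
    (fun t ht => hA.le.trans (hg t ht).1) (volFactor_of_le hr le_rfl) (hh.strictMonoOn hA)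
  rw [volMap_eq_radialMap]
  refine ⟨⟨hanti.injective, hsurj⟩, (congrArg _ hball.symm).trans (image_preimage_eq _ hsurj),
    fun x hx => ?_, ⟨_, lipschitzWith_radialMap hA.le hg hh⟩,
    ⟨_, hanti.to_rightInverse (rightInverse_invFun hsurj)⟩⟩
  rw [radialMap, volFactor_of_le hr hx, one_smul]

/-- The volume-adjusting map `f` is a bijection of `ℝⁿ` onto itself,
maps `B_r` onto `B_r`, equals the identity for `|x| ≥ r`, and `f` and `f⁻¹` are both
Lipschitz continuous. -/
theorem volMap_biLipschitz_bijection
    (n : ℕ) (hn : 1 ≤ n) (r σ : ℝ) (hr : 0 < r) (hσ : σ ∈ Set.Ioo (0 : ℝ) (2 ^ n)⁻¹) :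
    Function.Bijective (volMap n r σ) ∧
    volMap n r σ '' Metric.ball (0 : EuclideanSpace ℝ (Fin n)) r =
      Metric.ball (0 : EuclideanSpace ℝ (Fin n)) r ∧
    (∀ x : EuclideanSpace ℝ (Fin n), r ≤ ‖x‖ → volMap n r σ x = x) ∧
    (∃ K : NNReal, LipschitzWith K (volMap n r σ)) ∧
    (∃ K' : NNReal, LipschitzWith K' (Function.invFun (volMap n r σ))) :=
  volMap_biLipschitz_bijection_general n r σ hr hσ
end

section
/- Let n ≥ 1. There exist constants ε̄ > 0, σ₀ ∈ (0, 2^{−n}) and c > 0, depending only on n, with the following property. Let r > 0, σ ∈ (0, σ₀), ε ∈ (0, ε̄), and let E ⊆ ℝⁿ be Lebesgue measurable with finite measure such that |E ∩ B_{r/2}| < ε rⁿ and |E ∩ B_r| > ω_n rⁿ / 2^{n+2}. Let f be the map defined by f(x) = (1 − σ(2ⁿ − 1))x if |x| < r/2; f(x) = x + σ(1 − rⁿ/|x|ⁿ)x if r/2 ≤ |x| < r; f(x) = x if |x| ≥ r. Then |f(E)| − |E| ≥ c·σ·rⁿ. -/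
/-!
Write `f x = ρ(‖x‖) • x`. The radial profile `t ↦ ρ(t) t` is continuous and strictly increasing,
so `f` is injective and the pieces `E ∩ B_{r/2}`, `E ∩ (B_r \ B_{r/2})`, `E \ B_r` have disjoint
images. On `B_{r/2}`, `f` is the homothety of ratio `k = 1 − σ(2ⁿ − 1)`, which multiplies volume
by `kⁿ ≥ 1 − nσ(2ⁿ − 1)` (Bernoulli); outside `B_r` it is the identity; on the annulus its
Jacobian `φ^{n−1}(φ + σ n (r/‖x‖)ⁿ)`, with `φ = 1 + σ(1 − (r/‖x‖)ⁿ)`, is at least `1 + σ` as soon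
as `σ n 4ⁿ ≤ 1`. Hence `|f(E)| − |E| ≥ σ |E ∩ B_r| − σ(1 + n 2ⁿ) |E ∩ B_{r/2}|`, and the two
hypotheses on `E` bound this below by `σ ω_n rⁿ / 2^{n+3}` once `ε (1 + n 2ⁿ) ≤ ω_n / 2^{n+3}`.
-/

open MeasureTheory

open scoped Pointwise

section RadialMap

variable {E : Type*} [NormedAddCommGroup E] [InnerProductSpace ℝ E]

theorem hasFDerivAt_norm_of_ne_zero {x : E} (hx : x ≠ 0) :
    HasFDerivAt (‖·‖) (‖x‖⁻¹ • innerSL ℝ x) x := by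
  have h : HasFDerivAt (fun y : E => √(‖y‖ ^ 2)) _ x :=
    (Real.hasDerivAt_sqrt (by positivity)).comp_hasFDerivAt x
      (hasStrictFDerivAt_norm_sq x).hasFDerivAt
  simp only [Real.sqrt_sq (norm_nonneg _)] at h
  refine h.congr_fderiv ?_
  ext y
  simp only [one_div, mul_inv_rev, smul_apply, coe_innerSL_apply,
    nsmul_eq_mul, Nat.cast_ofNat, smul_eq_mul]
  field_simp

theorem hasFDerivAt_smul_radial {φ : ℝ → ℝ} {φ' : ℝ} {x : E} (hx : x ≠ 0)
    (hφ : HasDerivAt φ φ' ‖x‖) :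
    HasFDerivAt (fun y => φ ‖y‖ • y)
      (φ ‖x‖ • ContinuousLinearMap.id ℝ E + ((φ' / ‖x‖) • innerSL ℝ x).smulRight x) x := by
  have h := (hφ.comp_hasFDerivAt x (hasFDerivAt_norm_of_ne_zero hx)).smul (hasFDerivAt_id x)
  rw [smul_smul, ← div_eq_mul_inv] at h
  exact h

open Module Matrix in
theorem det_smul_id_add_smulRight_innerSL [FiniteDimensional ℝ E] (hE : 0 < finrank ℝ E)
    {a : ℝ} (ha : a ≠ 0) (c : ℝ) (x : E) :
    (a • ContinuousLinearMap.id ℝ E + (c • innerSL ℝ x).smulRight x).det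
      = a ^ (finrank ℝ E - 1) * (a + c * ‖x‖ ^ 2) := by
  set b := stdOrthonormalBasis ℝ E
  have hM : LinearMap.toMatrix b.toBasis b.toBasis
      (a • ContinuousLinearMap.id ℝ E + (c • innerSL ℝ x).smulRight x : E →L[ℝ] E)
      = a • (1 + replicateCol Unit (fun i => a⁻¹ * inner ℝ (b i) x) *
          replicateRow Unit (fun j => c * inner ℝ x (b j))) := by
    ext i j
    simp [LinearMap.toMatrix_apply, OrthonormalBasis.repr_apply_apply, Matrix.one_apply,
      Matrix.mul_apply, mul_add, ← mul_assoc, mul_inv_cancel₀ ha, mul_right_comm]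
  rw [ContinuousLinearMap.det, ← LinearMap.det_toMatrix b.toBasis, hM, Matrix.det_smul,
    Matrix.det_one_add_replicateCol_mul_replicateRow]
  have hdot : (fun j => c * inner ℝ x (b j)) ⬝ᵥ (fun i => a⁻¹ * inner ℝ (b i) x)
      = c * a⁻¹ * ‖x‖ ^ 2 := by
    simp only [dotProduct, ← real_inner_self_eq_norm_sq, ← b.sum_inner_mul_inner x x,
      Finset.mul_sum]
    exact Finset.sum_congr rfl fun _ _ => by ring
  rw [hdot, Fintype.card_fin, ← Nat.sub_add_cancel hE, pow_succ, Nat.add_sub_cancel]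
  field_simp

theorem injective_smul_radial {φ : ℝ → ℝ} (hinj : Set.InjOn (fun t => φ t * t) (Set.Ici 0))
    (hpos : ∀ t, 0 ≤ t → 0 < φ t) : Function.Injective (fun y : E => φ ‖y‖ • y) := by
  intro x y hxy
  have hnorm : ∀ z : E, ‖φ ‖z‖ • z‖ = φ ‖z‖ * ‖z‖ := fun z => by
    rw [norm_smul, Real.norm_of_nonneg (hpos _ (norm_nonneg z)).le]
  have hxy' : ‖x‖ = ‖y‖ :=
    hinj (norm_nonneg x) (norm_nonneg y) (by simpa only [hnorm] using congrArg norm hxy)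
  simp only [hxy'] at hxy
  exact smul_right_injective E (hpos _ (norm_nonneg y)).ne' hxy

end RadialMap

theorem ofReal_mul_le_addHaar_image {E : Type*} [NormedAddCommGroup E] [NormedSpace ℝ E]
    [FiniteDimensional ℝ E] [MeasurableSpace E] [BorelSpace E] (μ : Measure E)
    [μ.IsAddHaarMeasure] {f : E → E} {f' : E → E →L[ℝ] E} {s : Set E} {c : ℝ}
    (hs : MeasurableSet s) (hf' : ∀ x ∈ s, HasFDerivWithinAt f (f' x) s x) (hf : Set.InjOn f s)
    (hc : ∀ x ∈ s, c ≤ |(f' x).det|) :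
    ENNReal.ofReal c * μ s ≤ μ (f '' s) := by
  rw [← lintegral_abs_det_fderiv_eq_addHaar_image μ hs hf' hf, ← setLIntegral_const]
  exact setLIntegral_mono' hs fun x hx => ENNReal.ofReal_le_ofReal (hc x hx)

theorem Set.inter_union_inter_sdiff_of_subset {α : Type*} {s t u : Set α} (h : t ⊆ u) :
    s ∩ t ∪ s ∩ (u \ t) = s ∩ u := by
  rw [← Set.inter_union_distrib_left, Set.union_sdiff_cancel h]

theorem one_sub_mul_le_pow {a : ℝ} (ha : a ≤ 2) (n : ℕ) : 1 - n * a ≤ (1 - a) ^ n := by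
  simpa only [mul_neg, ← sub_eq_add_neg] using one_add_mul_le_pow (a := -a) (by linarith) n

theorem one_sub_mul_two_pow_sub_one_pos {n : ℕ} {σ : ℝ} (hn : 1 ≤ n) (hσ : 0 ≤ σ)
    (hσn : σ * (n * 4 ^ n) ≤ 1) : 0 < 1 - σ * (2 ^ n - 1) := by
  have h2 : (2 : ℝ) ^ n < n * 4 ^ n := calc
    (2 : ℝ) ^ n < 4 ^ n := pow_lt_pow_left₀ (by norm_num) (by norm_num) (by omega)
    _ ≤ n * 4 ^ n := le_mul_of_one_le_left (by positivity) (by exact_mod_cast hn)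
  rcases hσ.eq_or_lt with rfl | hσ
  · norm_num
  · nlinarith

theorem one_add_le_annulus_jacobian {n : ℕ} {σ s : ℝ} (hn : 1 ≤ n) (hσ : 0 ≤ σ)
    (hσn : σ * (n * 4 ^ n) ≤ 1) (hs : 1 ≤ s) (hs' : s ≤ 2 ^ n) :
    1 + σ ≤ (1 + σ * (1 - s)) ^ (n - 1) * (1 + σ * (1 - s) + σ * n * s) := by
  obtain ⟨m, rfl⟩ : ∃ m, n = m + 1 := ⟨n - 1, by omega⟩
  rw [Nat.add_sub_cancel]
  push_cast at hσn ⊢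
  have hm : (0 : ℝ) ≤ m := m.cast_nonneg
  have hσs : 0 ≤ σ * (s - 1) := mul_nonneg hσ (by linarith)
  have hsm : 0 ≤ m * s := mul_nonneg hm (by linarith)
  have hkey : σ * ((s - 1) * (1 + m * s)) ≤ 1 := by
    have h4 : (4 : ℝ) ^ (m + 1) = 2 ^ (m + 1) * 2 ^ (m + 1) := by rw [← mul_pow]; norm_num
    have : (s - 1) * (1 + m * s) ≤ (m + 1) * 4 ^ (m + 1) := by
      rw [h4]; nlinarith [mul_le_mul_of_nonneg_left hs' hm]
    nlinarith
  have hu : σ * (s - 1) ≤ 1 := by nlinarith [mul_nonneg hσs hsm]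
  have hbernoulli : 1 - m * (σ * (s - 1)) ≤ (1 + σ * (1 - s)) ^ m := by
    rw [show 1 + σ * (1 - s) = 1 - σ * (s - 1) by ring]
    exact one_sub_mul_le_pow (by linarith) m
  -- `(1 - m σ (s - 1)) (1 + σ + m σ s) = 1 + σ + m σ (1 - σ (s - 1) (1 + m s))`
  calc 1 + σ ≤ (1 - m * (σ * (s - 1))) * (1 + σ * (1 - s) + σ * (m + 1) * s) := by
        nlinarith [mul_nonneg (mul_nonneg hσ hm) (sub_nonneg.2 hkey)]
    _ ≤ _ := by
        gcongr
        nlinarith [mul_nonneg hσ hsm]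

noncomputable def annulusFactor (n : ℕ) (r σ t : ℝ) : ℝ := 1 + σ * (1 - r ^ n / t ^ n)

section annulusFactor

variable {n : ℕ} {r σ : ℝ}

theorem annulusFactor_half (hr : r ≠ 0) : annulusFactor n r σ (r / 2) = 1 - σ * (2 ^ n - 1) := by
  have : r ^ n / (r / 2) ^ n = 2 ^ n := by rw [← div_pow, show r / (r / 2) = 2 by field_simp]
  rw [annulusFactor, this]
  ring

theorem annulusFactor_self (hr : r ≠ 0) : annulusFactor n r σ r = 1 := by
  simp [annulusFactor, hr]

theorem annulusFactor_monotoneOn (hr : 0 ≤ r) (hσ : 0 ≤ σ) :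
    MonotoneOn (annulusFactor n r σ) (Set.Ioi 0) := by
  intro s hs t _ hst
  have : 0 < s := hs
  unfold annulusFactor
  gcongr

theorem hasDerivAt_annulusFactor {t : ℝ} (ht : t ≠ 0) :
    HasDerivAt (annulusFactor n r σ) (σ * n * r ^ n / t ^ (n + 1)) t := by
  have h := ((((hasDerivAt_zpow (-n) t (.inl ht)).const_mul (r ^ n)).const_sub 1).const_mul
    σ).const_add 1
  simp only [zpow_neg, zpow_natCast, ← div_eq_mul_inv] at h
  refine h.congr_deriv ?_
  rw [show (-(n : ℤ) - 1) = -((n + 1 : ℕ) : ℤ) by push_cast; ring, zpow_neg, zpow_natCast]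
  push_cast
  ring

theorem one_sub_mul_le_annulusFactor (hr : 0 < r) (hσ : 0 ≤ σ) {t : ℝ} (ht : r / 2 ≤ t) :
    1 - σ * (2 ^ n - 1) ≤ annulusFactor n r σ t := by
  rw [← annulusFactor_half hr.ne']
  exact annulusFactor_monotoneOn hr.le hσ (half_pos hr) ((half_pos hr).trans_le ht) ht

theorem strictMonoOn_annulusFactor_mul (hr : 0 < r) (hσ : 0 ≤ σ)
    (hk : 0 < 1 - σ * (2 ^ n - 1)) :
    StrictMonoOn (fun t => annulusFactor n r σ t * t) (Set.Icc (r / 2) r) := by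
  intro s hs t ht hst
  have hφ : annulusFactor n r σ s ≤ annulusFactor n r σ t :=
    annulusFactor_monotoneOn hr.le hσ (by simp only [Set.mem_Ioi]; linarith [hs.1])
      (by simp only [Set.mem_Ioi]; linarith [ht.1]) hst.le
  have hφt := one_sub_mul_le_annulusFactor (n := n) hr hσ ht.1
  dsimp only
  nlinarith [hs.1]

end annulusFactor

noncomputable def volMapFactor (n : ℕ) (r σ t : ℝ) : ℝ :=
  if t < r / 2 then 1 - σ * (2 ^ n - 1) else if t < r then annulusFactor n r σ t else 1

theorem volMap_eq_smul (n : ℕ) (r σ : ℝ) (x : EuclideanSpace ℝ (Fin n)) :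
    volMap n r σ x = volMapFactor n r σ ‖x‖ • x := by
  unfold volMap volMapFactor annulusFactor
  split_ifs <;> simp [add_smul]

section volMapFactor

variable {n : ℕ} {r σ : ℝ}

theorem volMapFactor_of_lt_half {t : ℝ} (ht : t < r / 2) :
    volMapFactor n r σ t = 1 - σ * (2 ^ n - 1) := if_pos ht

theorem volMapFactor_of_mem_Ico {t : ℝ} (ht : t ∈ Set.Ico (r / 2) r) :
    volMapFactor n r σ t = annulusFactor n r σ t := by
  rw [volMapFactor, if_neg (not_lt.2 ht.1), if_pos ht.2]

theorem volMapFactor_of_le (hr : 0 ≤ r) {t : ℝ} (ht : r ≤ t) : volMapFactor n r σ t = 1 := by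
  rw [volMapFactor, if_neg (by linarith), if_neg (not_lt.2 ht)]

theorem volMapFactor_pos (hr : 0 < r) (hσ : 0 ≤ σ) (hk : 0 < 1 - σ * (2 ^ n - 1)) (t : ℝ) :
    0 < volMapFactor n r σ t := by
  unfold volMapFactor
  split_ifs with h1 h2
  · exact hk
  · exact hk.trans_le (one_sub_mul_le_annulusFactor hr hσ (not_lt.1 h1))
  · exact one_pos

theorem strictMono_volMapFactor_mul (hr : 0 < r) (hσ : 0 ≤ σ) (hk : 0 < 1 - σ * (2 ^ n - 1)) :
    StrictMono (fun t => volMapFactor n r σ t * t) := by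
  have hr2 : r / 2 ≤ r := half_le_self hr.le
  have hinner : Set.EqOn (fun t => (1 - σ * (2 ^ n - 1)) * t)
      (fun t => volMapFactor n r σ t * t) (Set.Iic (r / 2)) := by
    intro t ht
    dsimp only
    rcases (Set.mem_Iic.1 ht).lt_or_eq with h | h
    · rw [volMapFactor_of_lt_half h]
    · rw [h, volMapFactor_of_mem_Ico ⟨le_rfl, half_lt_self hr⟩, annulusFactor_half hr.ne']
  have hannulus : Set.EqOn (fun t => annulusFactor n r σ t * t)
      (fun t => volMapFactor n r σ t * t) (Set.Icc (r / 2) r) := by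
    rintro t ⟨ht1, ht2⟩
    dsimp only
    rcases ht2.lt_or_eq with h | h
    · rw [volMapFactor_of_mem_Ico ⟨ht1, h⟩]
    · rw [h, volMapFactor_of_le hr.le le_rfl, annulusFactor_self hr.ne']
  have houter : Set.EqOn id (fun t => volMapFactor n r σ t * t) (Set.Ici r) := fun t ht => by
    simp [volMapFactor_of_le hr.le ht]
  refine ((strictMono_mul_left_of_pos hk).strictMonoOn _ |>.congr hinner).Iic_union_Ici ?_
  rw [← Set.Icc_union_Ici_eq_Ici hr2]
  exact ((strictMonoOn_annulusFactor_mul hr hσ hk).congr hannulus).union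
    (strictMono_id.strictMonoOn _ |>.congr houter) (isGreatest_Icc hr2) isLeast_Ici

theorem volMap_injective (hr : 0 < r) (hσ : 0 ≤ σ) (hk : 0 < 1 - σ * (2 ^ n - 1)) :
    Function.Injective (volMap n r σ) := by
  rw [funext (volMap_eq_smul n r σ)]
  exact injective_smul_radial (strictMono_volMapFactor_mul hr hσ hk).injective.injOn
    fun t _ => volMapFactor_pos hr hσ hk t

theorem volMap_mapsTo_ball (hr : 0 < r) (hσ : 0 ≤ σ) (hk : 0 < 1 - σ * (2 ^ n - 1)) :
    Set.MapsTo (volMap n r σ) (Metric.ball 0 r) (Metric.ball 0 r) := fun x hx => by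
  rw [mem_ball_zero_iff] at hx ⊢
  have h : volMapFactor n r σ ‖x‖ * ‖x‖ < volMapFactor n r σ r * r :=
    strictMono_volMapFactor_mul hr hσ hk hx
  rwa [volMapFactor_of_le hr.le le_rfl, one_mul, ← Real.norm_of_nonneg
    (volMapFactor_pos hr hσ hk ‖x‖).le, ← norm_smul, ← volMap_eq_smul] at h

end volMapFactor

section volMapVolume

variable {n : ℕ} {r σ : ℝ} {s : Set (EuclideanSpace ℝ (Fin n))}

theorem one_add_le_det_annulus (hn : 1 ≤ n) (hr : 0 < r) (hσ : 0 ≤ σ)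
    (hσn : σ * (n * 4 ^ n) ≤ 1) {x : EuclideanSpace ℝ (Fin n)} (hx : ‖x‖ ∈ Set.Icc (r / 2) r) :
    1 + σ ≤ (annulusFactor n r σ ‖x‖ • ContinuousLinearMap.id ℝ _ +
      ((σ * n * r ^ n / ‖x‖ ^ (n + 1) / ‖x‖) • innerSL ℝ x).smulRight x).det := by
  have hx0 : 0 < ‖x‖ := by linarith [hx.1]
  have hφ := one_sub_mul_le_annulusFactor (n := n) hr hσ hx.1
  have hk := one_sub_mul_two_pow_sub_one_pos hn hσ hσn
  rw [det_smul_id_add_smulRight_innerSL (by rw [finrank_euclideanSpace_fin]; omega) (by linarith),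
    finrank_euclideanSpace_fin]
  have hs : r ^ n / ‖x‖ ^ n = (r / ‖x‖) ^ n := (div_pow _ _ _).symm
  have hrx1 : 1 ≤ r / ‖x‖ := (one_le_div hx0).2 hx.2
  have hrx2 : r / ‖x‖ ≤ 2 := (div_le_iff₀ hx0).2 (by linarith [hx.1])
  have hcoef : σ * n * r ^ n / ‖x‖ ^ (n + 1) / ‖x‖ * ‖x‖ ^ 2 = σ * n * (r ^ n / ‖x‖ ^ n) := by
    field_simp
    ring
  rw [hcoef, annulusFactor]
  exact one_add_le_annulus_jacobian hn hσ hσn (hs ▸ one_le_pow₀ hrx1)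
    (hs ▸ pow_le_pow_left₀ (by linarith) hrx2 n)

theorem ofReal_one_add_mul_le_volume_volMap_image_annulus (hn : 1 ≤ n) (hr : 0 < r)
    (hσ : 0 ≤ σ) (hσn : σ * (n * 4 ^ n) ≤ 1) (hs : MeasurableSet s) :
    ENNReal.ofReal (1 + σ) * volume (s ∩ (Metric.ball 0 r \ Metric.ball 0 (r / 2))) ≤
      volume (volMap n r σ '' (s ∩ (Metric.ball 0 r \ Metric.ball 0 (r / 2)))) := by
  set A := s ∩ (Metric.ball (0 : EuclideanSpace ℝ (Fin n)) r \ Metric.ball 0 (r / 2))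
  have hnorm : ∀ x ∈ A, ‖x‖ ∈ Set.Ico (r / 2) r := fun x hx =>
    ⟨not_lt.1 fun h => hx.2.2 (mem_ball_zero_iff.2 h), mem_ball_zero_iff.1 hx.2.1⟩
  have heq : Set.EqOn (volMap n r σ) (fun y => annulusFactor n r σ ‖y‖ • y) A := fun y hy => by
    rw [volMap_eq_smul, volMapFactor_of_mem_Ico (hnorm y hy)]
  refine ofReal_mul_le_addHaar_image volume (hs.inter (measurableSet_ball.diff measurableSet_ball))
    (fun x hx => ?_) (volMap_injective hr hσ (one_sub_mul_two_pow_sub_one_pos hn hσ hσn)).injOn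
    fun x hx => (one_add_le_det_annulus hn hr hσ hσn
      (Set.Ico_subset_Icc_self (hnorm x hx))).trans (le_abs_self _)
  have hx0 : x ≠ 0 := norm_pos_iff.1 (by linarith [(hnorm x hx).1])
  exact (hasFDerivAt_smul_radial hx0 (hasDerivAt_annulusFactor (norm_ne_zero_iff.2 hx0)))
    |>.hasFDerivWithinAt.congr heq (heq hx)

theorem volMap_image_inter_ball_half (s : Set (EuclideanSpace ℝ (Fin n))) :
    volMap n r σ '' (s ∩ Metric.ball 0 (r / 2)) =
      (1 - σ * (2 ^ n - 1)) • (s ∩ Metric.ball 0 (r / 2)) := by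
  rw [← Set.image_smul]
  refine Set.image_congr fun x hx => ?_
  rw [volMap_eq_smul, volMapFactor_of_lt_half (mem_ball_zero_iff.1 hx.2)]

theorem volMap_image_sdiff_ball (hr : 0 ≤ r) (s : Set (EuclideanSpace ℝ (Fin n))) :
    volMap n r σ '' (s \ Metric.ball 0 r) = s \ Metric.ball 0 r := by
  conv_rhs => rw [← Set.image_id (s \ _)]
  refine Set.image_congr fun x hx => ?_
  rw [volMap_eq_smul, volMapFactor_of_le hr (not_lt.1 fun h => hx.2 (mem_ball_zero_iff.2 h)),
    one_smul, id]

theorem volume_volMap_image (hr : 0 < r) (hσ : 0 ≤ σ) (hk : 0 < 1 - σ * (2 ^ n - 1))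
    (hs : MeasurableSet s) :
    volume (volMap n r σ '' s) =
      ENNReal.ofReal ((1 - σ * (2 ^ n - 1)) ^ n) * volume (s ∩ Metric.ball 0 (r / 2)) +
        volume (volMap n r σ '' (s ∩ (Metric.ball 0 r \ Metric.ball 0 (r / 2)))) +
        volume (s \ Metric.ball 0 r) := by
  have hinj := volMap_injective hr hσ hk
  have hsub : Metric.ball (0 : EuclideanSpace ℝ (Fin n)) (r / 2) ⊆ Metric.ball 0 r :=
    Metric.ball_subset_ball (half_le_self hr.le)
  have hinner : Disjoint (s ∩ Metric.ball 0 (r / 2))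
      (s ∩ (Metric.ball 0 r \ Metric.ball 0 (r / 2))) :=
    Set.disjoint_left.2 fun x hx hx' => hx'.2.2 hx.2
  have hcore : volume (volMap n r σ '' (s ∩ Metric.ball 0 r)) =
      ENNReal.ofReal ((1 - σ * (2 ^ n - 1)) ^ n) * volume (s ∩ Metric.ball 0 (r / 2)) +
        volume (volMap n r σ '' (s ∩ (Metric.ball 0 r \ Metric.ball 0 (r / 2)))) := by
    rw [← Set.inter_union_inter_sdiff_of_subset hsub, Set.image_union,
      measure_union' ((Set.disjoint_image_iff hinj).2 hinner)
        (by rw [volMap_image_inter_ball_half]; exact (hs.inter measurableSet_ball).const_smul₀ _),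
      volMap_image_inter_ball_half, Measure.addHaar_smul_of_nonneg _ hk.le,
      finrank_euclideanSpace_fin]
  conv_lhs => rw [← Set.inter_union_sdiff s (Metric.ball 0 r)]
  rw [Set.image_union,
    measure_union ((Set.disjoint_image_iff hinj).2 Set.disjoint_sdiff_inter.symm)
      (by rw [volMap_image_sdiff_ball hr.le]; exact hs.diff measurableSet_ball),
    volMap_image_sdiff_ball hr.le, hcore]

theorem le_volume_volMap_image_sub_volume (hn : 1 ≤ n) (hr : 0 < r) (hσ : 0 ≤ σ)
    (hσn : σ * (n * 4 ^ n) ≤ 1) (hs : MeasurableSet s) (hfin : volume s < ⊤) :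
    σ * (volume (s ∩ Metric.ball 0 r)).toReal -
        σ * (1 + n * 2 ^ n) * (volume (s ∩ Metric.ball 0 (r / 2))).toReal ≤
      (volume (volMap n r σ '' s)).toReal - (volume s).toReal := by
  have hk := one_sub_mul_two_pow_sub_one_pos hn hσ hσn
  set A := s ∩ (Metric.ball (0 : EuclideanSpace ℝ (Fin n)) r \ Metric.ball 0 (r / 2))
  have hfin₁ : volume (s ∩ Metric.ball 0 (r / 2)) ≠ ⊤ :=
    measure_ne_top_of_subset Set.inter_subset_left hfin.ne
  have hfinA : volume A ≠ ⊤ := measure_ne_top_of_subset Set.inter_subset_left hfin.ne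
  have hfin₃ : volume (s \ Metric.ball 0 r) ≠ ⊤ := measure_ne_top_of_subset Set.sdiff_subset hfin.ne
  have himgA : volume (volMap n r σ '' A) ≠ ⊤ :=
    (measure_mono ((volMap_mapsTo_ball hr hσ hk).mono_left fun _ hx => hx.2.1).image_subset
      |>.trans_lt measure_ball_lt_top).ne
  have hgainA : (1 + σ) * (volume A).toReal ≤ (volume (volMap n r σ '' A)).toReal := by
    have := ENNReal.toReal_mono himgA
      (ofReal_one_add_mul_le_volume_volMap_image_annulus hn hr hσ hσn hs)
    rwa [ENNReal.toReal_mul, ENNReal.toReal_ofReal (by linarith)] at this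
  have himg : (volume (volMap n r σ '' s)).toReal =
      (1 - σ * (2 ^ n - 1)) ^ n * (volume (s ∩ Metric.ball 0 (r / 2))).toReal +
        (volume (volMap n r σ '' A)).toReal + (volume (s \ Metric.ball 0 r)).toReal := by
    rw [volume_volMap_image hr hσ hk hs, ENNReal.toReal_add, ENNReal.toReal_add,
      ENNReal.toReal_mul, ENNReal.toReal_ofReal (by positivity)]
    all_goals finiteness
  have hball : (volume (s ∩ Metric.ball 0 r)).toReal =
      (volume (s ∩ Metric.ball 0 (r / 2))).toReal + (volume A).toReal := by
    rw [← Set.inter_union_inter_sdiff_of_subset (Metric.ball_subset_ball (half_le_self hr.le)),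
      measure_union (Set.disjoint_left.2 fun x hx hx' => hx'.2.2 hx.2)
        (hs.inter (measurableSet_ball.diff measurableSet_ball)), ENNReal.toReal_add hfin₁ hfinA]
  have hvol : (volume s).toReal =
      (volume (s ∩ Metric.ball 0 r)).toReal + (volume (s \ Metric.ball 0 r)).toReal := by
    rw [← ENNReal.toReal_add (measure_ne_top_of_subset Set.inter_subset_left hfin.ne) hfin₃,
      measure_inter_add_sdiff s measurableSet_ball]
  have hbernoulli := one_sub_mul_le_pow (a := σ * (2 ^ n - 1)) (by linarith) n
  have hm₁ : 0 ≤ (volume (s ∩ Metric.ball 0 (r / 2))).toReal := ENNReal.toReal_nonneg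
  rw [himg, hvol, hball]
  nlinarith [mul_le_mul_of_nonneg_right hbernoulli hm₁,
    mul_nonneg (mul_nonneg (Nat.cast_nonneg (α := ℝ) n) hσ) hm₁]

end volMapVolume

/-- Quantitative volume increase under the volume-adjusting map:
there are dimensional constants `ε̄ > 0`, `σ₀ ∈ (0, 2^{−n})`, `c > 0` such that if
`|E ∩ B_{r/2}| < ε rⁿ` and `|E ∩ B_r| > ω_n rⁿ/2^{n+2}`, with `σ ∈ (0,σ₀)` and
`ε ∈ (0,ε̄)`, then `|f(E)| − |E| ≥ c σ rⁿ`. -/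
theorem volMap_volume_increase
    (n : ℕ) (hn : 1 ≤ n) :
    ∃ εbar > (0 : ℝ), ∃ σ₀ ∈ Set.Ioo (0 : ℝ) (2 ^ n)⁻¹, ∃ c > (0 : ℝ),
      ∀ (r : ℝ), 0 < r → ∀ σ ∈ Set.Ioo (0 : ℝ) σ₀, ∀ ε ∈ Set.Ioo (0 : ℝ) εbar,
        ∀ E : Set (EuclideanSpace ℝ (Fin n)), MeasurableSet E → volume E < ⊤ →
          (volume (E ∩ Metric.ball (0 : EuclideanSpace ℝ (Fin n)) (r / 2))).toReal <
            ε * r ^ n →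
          (volume (E ∩ Metric.ball (0 : EuclideanSpace ℝ (Fin n)) r)).toReal >
            (volume (Metric.ball (0 : EuclideanSpace ℝ (Fin n)) 1)).toReal * r ^ n /
              2 ^ (n + 2) →
          c * σ * r ^ n ≤
            (volume (volMap n r σ '' E)).toReal - (volume E).toReal := by
  set ω := (volume (Metric.ball (0 : EuclideanSpace ℝ (Fin n)) 1)).toReal
  have hω : 0 < ω :=
    ENNReal.toReal_pos (Metric.measure_ball_pos _ _ one_pos).ne' measure_ball_lt_top.ne
  refine ⟨ω / (2 ^ (n + 3) * (1 + n * 2 ^ n)), by positivity, (n * 4 ^ n + 2 ^ n)⁻¹,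
    ⟨by positivity, inv_strictAnti₀ (by positivity) (lt_add_of_pos_left _ (by positivity))⟩,
    ω / 2 ^ (n + 3), by positivity, ?_⟩
  rintro r hr σ ⟨hσ, hσ₀⟩ ε ⟨-, hε⟩ E hE hEfin hsmall hlarge
  have hσn : σ * (n * 4 ^ n) ≤ 1 := by
    rw [← one_div, lt_div_iff₀ (by positivity)] at hσ₀
    nlinarith [mul_pos hσ (pow_pos two_pos n)]
  have hε' : ε * (1 + n * 2 ^ n) ≤ ω / 2 ^ (n + 3) := by
    rw [lt_div_iff₀ (by positivity)] at hε
    rw [le_div_iff₀ (by positivity)]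
    linarith
  have hgain := le_volume_volMap_image_sub_volume hn hr hσ.le hσn hE hEfin
  have h2 : (2 : ℝ) ^ (n + 3) = 2 * 2 ^ (n + 2) := by ring
  have hrn : 0 < σ * r ^ n := by positivity
  calc ω / 2 ^ (n + 3) * σ * r ^ n
      = σ * (ω * r ^ n / 2 ^ (n + 2)) - σ * r ^ n * (ω / 2 ^ (n + 3)) := by
        rw [h2]; field_simp; ring
    _ ≤ σ * (volume (E ∩ Metric.ball 0 r)).toReal - σ * (1 + n * 2 ^ n) * (ε * r ^ n) := by
        nlinarith [mul_le_mul_of_nonneg_left hε' hrn.le]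
    _ ≤ σ * (volume (E ∩ Metric.ball 0 r)).toReal -
          σ * (1 + n * 2 ^ n) * (volume (E ∩ Metric.ball 0 (r / 2))).toReal := by
        gcongr
    _ ≤ _ := hgain
end
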